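/- Let n ≥ q ≥ 1 be integers, let v ∈ ℝⁿ have all entries positive, let X ∈ F_v, let X⊥ be an n×(n−q) real matrix such that (X X⊥) is orthogonal, and set ṽ = v/‖v‖₂. Let (e_1,…,e_q) be the canonical basis of ℝ^q and (ẽ_1,…,ẽ_{n−q}) the canonical basis of ℝ^{n−q}. Then the family consisting of the matrices X e_i e_iᵀ for 1 ≤ i ≤ q, the matrices (1/√2) X (e_i e_jᵀ + e_j e_iᵀ) for 1 ≤ i < j ≤ q, and the matrices X⊥ ẽ_i ṽᵀ X for 1 ≤ i ≤ n−q, is an orthonormal family in ℝ^{n×q} with respect to the Frobenius inner product, is contained in N_X, and its linear span equals N_X; i.e., it is an orthonormal basis of N_X. -/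

import Mathlib

open Matrix

/-- Index type for the basis of the normal space: `q` indices for `X e_i e_iᵀ`, pairs
`i < j` for `(1/√2) X (e_i e_jᵀ + e_j e_iᵀ)`, and `n − q` indices for `X⊥ ẽ_i ṽᵀ X`. -/
abbrev BasisIdx (n q : ℕ) :=
  Fin q ⊕ {p : Fin q × Fin q // p.1 < p.2} ⊕ Fin (n - q)

/-- The family of matrices: `X e_i e_iᵀ` (`1 ≤ i ≤ q`),
`(1/√2) X (e_i e_jᵀ + e_j e_iᵀ)` (`1 ≤ i < j ≤ q`), and `X⊥ ẽ_i ṽᵀ X` (`1 ≤ i ≤ n − q`),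
where `ṽ = v / ‖v‖₂`. -/
noncomputable def basisFam (n q : ℕ) (v : Fin n → ℝ) (X : Matrix (Fin n) (Fin q) ℝ)
    (Xp : Matrix (Fin n) (Fin (n - q)) ℝ) :
    BasisIdx n q → Matrix (Fin n) (Fin q) ℝ
  | Sum.inl i => X * Matrix.single i i (1 : ℝ)
  | Sum.inr (Sum.inl p) => (Real.sqrt 2)⁻¹ •
      (X * (Matrix.single p.1.1 p.1.2 (1 : ℝ) + Matrix.single p.1.2 p.1.1 (1 : ℝ)))
  | Sum.inr (Sum.inr i) =>
      vecMulVec (fun r => Xp r i) (((Real.sqrt (∑ k, v k ^ 2))⁻¹ • v) ᵥ* X)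

/-!
The family consists of the images `X E` of the orthonormal basis `E_ii`, `(E_ij + E_ji)/√2`
(`i < j`) of the symmetric `q × q` matrices, together with the rank-one matrices `X⊥ ẽ_i bᵀ`,
`b = ṽᵀX`. Since `XᵀX = 1`, `M ↦ XM` preserves the Frobenius inner product; since `XᵀX⊥ = 0`,
every `XM` is orthogonal to every `X⊥ w bᵀ`; and `X⊥ᵀX⊥ = 1` together with `‖vᵀX‖ = ‖v‖` (as `v`
lies in the column space of `X`) makes the rank-one block orthonormal. Conversely a symmetric `S`
equals `½ ∑ S_ij (E_ij + E_ji)`, and `X⊥ u vᵀX = ∑ u_i ‖v‖ X⊥ ẽ_i ṽᵀX`, so the family spans `N_X`.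
-/

namespace Matrix

variable {m k p : Type*}

theorem trace_transpose_mul_comm [Fintype m] [Fintype k] (A B : Matrix m k ℝ) :
    trace (Aᵀ * B) = trace (Bᵀ * A) := by
  rw [← trace_transpose, transpose_mul, transpose_transpose]

theorem trace_smul_transpose_mul_smul [Fintype m] [Fintype k] (r s : ℝ) (A B : Matrix m k ℝ) :
    trace ((r • A)ᵀ * (s • B)) = r * s * trace (Aᵀ * B) := by
  rw [transpose_smul, Matrix.smul_mul, Matrix.mul_smul, trace_smul, trace_smul, smul_smul,
    smul_eq_mul]

theorem trace_vecMulVec_transpose_mul_vecMulVec [Fintype m] [Fintype k] (a a' : m → ℝ)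
    (b b' : k → ℝ) : trace ((vecMulVec a b)ᵀ * vecMulVec a' b') = (a ⬝ᵥ a') * (b ⬝ᵥ b') := by
  rw [transpose_vecMulVec, vecMulVec_mul_vecMulVec, trace_vecMulVec, dotProduct_smul,
    smul_eq_mul]

theorem trace_single_transpose_mul_single [Fintype k] [DecidableEq k] (a b c d : k) :
    trace ((single a b (1 : ℝ))ᵀ * single c d 1) = if a = c ∧ b = d then 1 else 0 := by
  rw [transpose_single, trace_single_mul, single_apply]
  simp [eq_comm]

theorem inv_sqrt_smul_dotProduct_self [Fintype k] {w : k → ℝ} {s : ℝ} (hs : 0 < s)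
    (hw : w ⬝ᵥ w = s) : ((√s)⁻¹ • w) ⬝ᵥ ((√s)⁻¹ • w) = 1 := by
  rw [smul_dotProduct, dotProduct_smul, hw, smul_eq_mul, smul_eq_mul, ← mul_assoc, ← mul_inv,
    Real.mul_self_sqrt hs.le, inv_mul_cancel₀ hs.ne']

theorem vecMulVec_mulVec_eq_sum [Fintype p] (Y : Matrix m p ℝ) (u : p → ℝ) (c : k → ℝ) :
    vecMulVec (Y *ᵥ u) c = ∑ i, u i • vecMulVec (Y.col i) c := by
  ext r s
  simp only [vecMulVec_apply, mulVec, dotProduct, Matrix.sum_apply, smul_apply, smul_eq_mul,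
    col_apply, Finset.sum_mul]
  exact Finset.sum_congr rfl fun i _ => by ring

theorem fromCols_transpose_mul_fromCols_eq_one_iff {n₁ n₂ : Type*} [Fintype m] [DecidableEq n₁]
    [DecidableEq n₂] (X : Matrix m n₁ ℝ) (Y : Matrix m n₂ ℝ) :
    (fromCols X Y)ᵀ * fromCols X Y = 1 ↔
      Xᵀ * X = 1 ∧ Xᵀ * Y = 0 ∧ Yᵀ * X = 0 ∧ Yᵀ * Y = 1 := by
  rw [transpose_fromCols, fromRows_mul_fromCols, ← fromBlocks_one, fromBlocks_inj]

section TransposeMulSelf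

variable [Fintype m] [Fintype k] [DecidableEq k] {X : Matrix m k ℝ}

theorem trace_mul_transpose_mul_mul_of_transpose_mul_self [Fintype p] (hX : Xᵀ * X = 1)
    (M N : Matrix k p ℝ) : trace ((X * M)ᵀ * (X * N)) = trace (Mᵀ * N) := by
  rw [transpose_mul, Matrix.mul_assoc, ← Matrix.mul_assoc Xᵀ, hX, Matrix.one_mul]

theorem mulVec_dotProduct_mulVec_of_transpose_mul_self (hX : Xᵀ * X = 1) (x y : k → ℝ) :
    (X *ᵥ x) ⬝ᵥ (X *ᵥ y) = x ⬝ᵥ y := by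
  rw [dotProduct_mulVec, ← mulVec_transpose, mulVec_mulVec, hX, one_mulVec]

theorem mulVec_vecMul_of_transpose_mul_self (hX : Xᵀ * X = 1) (x : k → ℝ) :
    (X *ᵥ x) ᵥ* X = x := by
  rw [← mulVec_transpose, mulVec_mulVec, hX, one_mulVec]

theorem vecMul_dotProduct_vecMul_of_transpose_mul_self (hX : Xᵀ * X = 1) {v : m → ℝ}
    (hv : ∃ c, X *ᵥ c = v) : (v ᵥ* X) ⬝ᵥ (v ᵥ* X) = v ⬝ᵥ v := by
  obtain ⟨c, rfl⟩ := hv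
  rw [mulVec_vecMul_of_transpose_mul_self hX, mulVec_dotProduct_mulVec_of_transpose_mul_self hX]

end TransposeMulSelf

theorem trace_mul_transpose_mul_vecMulVec_of_mulVec_eq_zero [Fintype m] [Fintype k] [Fintype p]
    {X : Matrix m k ℝ} {w : m → ℝ} (hw : Xᵀ *ᵥ w = 0) (M : Matrix k p ℝ) (b : p → ℝ) :
    trace ((X * M)ᵀ * vecMulVec w b) = 0 := by
  rw [transpose_mul, Matrix.mul_assoc, mul_vecMulVec, hw, zero_vecMulVec, Matrix.mul_zero,
    trace_zero]

def symmSingle [DecidableEq k] (i j : k) : Matrix k k ℝ := single i j 1 + single j i 1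

theorem symmSingle_comm [DecidableEq k] (i j : k) : symmSingle i j = symmSingle j i :=
  add_comm _ _

theorem transpose_symmSingle [DecidableEq k] (i j : k) : (symmSingle i j)ᵀ = symmSingle i j := by
  rw [symmSingle, transpose_add, transpose_single, transpose_single, add_comm]

theorem symmSingle_self [DecidableEq k] (i : k) : symmSingle i i = (2 : ℝ) • single i i 1 :=
  (two_smul ℝ _).symm

theorem sum_sum_smul_symmSingle [Fintype k] [DecidableEq k] (S : Matrix k k ℝ) :
    ∑ i, ∑ j, S i j • symmSingle i j = S + Sᵀ := by
  ext r s
  simp [symmSingle, Matrix.sum_apply, single_apply, Finset.sum_add_distrib, ite_and]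

theorem eq_inv_two_smul_sum_sum_smul_symmSingle [Fintype k] [DecidableEq k] {S : Matrix k k ℝ}
    (hS : Sᵀ = S) : S = (2 : ℝ)⁻¹ • ∑ i, ∑ j, S i j • symmSingle i j := by
  rw [sum_sum_smul_symmSingle, hS, ← two_smul ℝ S, smul_smul, inv_mul_cancel₀ two_ne_zero,
    one_smul]

theorem trace_single_transpose_mul_symmSingle [Fintype k] [DecidableEq k] (i : k) {a b : k}
    (hab : a ≠ b) : trace ((single i i (1 : ℝ))ᵀ * symmSingle a b) = 0 := by
  rw [symmSingle, Matrix.mul_add, trace_add, trace_single_transpose_mul_single,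
    trace_single_transpose_mul_single]
  grind

theorem trace_symmSingle_transpose_mul_symmSingle [Fintype k] [LinearOrder k] {a b c d : k}
    (hab : a < b) (hcd : c < d) :
    trace ((symmSingle a b)ᵀ * symmSingle c d) = if (a, b) = (c, d) then 2 else 0 := by
  simp only [symmSingle, transpose_add, Matrix.add_mul, Matrix.mul_add, trace_add,
    trace_single_transpose_mul_single, Prod.mk.injEq]
  grind

def normalSpace [Fintype k] [Fintype p] (X : Matrix m k ℝ) (Y : Matrix m p ℝ) (c : k → ℝ) :
    Submodule ℝ (Matrix m k ℝ) where
  carrier := {U | ∃ (S : Matrix k k ℝ) (u : p → ℝ), Sᵀ = S ∧ U = X * S + vecMulVec (Y *ᵥ u) c}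
  zero_mem' := ⟨0, 0, transpose_zero, by simp⟩
  add_mem' := by
    rintro _ _ ⟨S, u, hS, rfl⟩ ⟨S', u', hS', rfl⟩
    refine ⟨S + S', u + u', by rw [transpose_add, hS, hS'], ?_⟩
    rw [Matrix.mul_add, mulVec_add, add_vecMulVec]
    abel
  smul_mem' := by
    rintro a _ ⟨S, u, hS, rfl⟩
    exact ⟨a • S, a • u, by rw [transpose_smul, hS], by
      rw [Matrix.mul_smul, mulVec_smul, smul_vecMulVec, smul_add]⟩

section normalSpace

variable [Fintype k] [Fintype p] {X : Matrix m k ℝ} {Y : Matrix m p ℝ} {c : k → ℝ}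

theorem mul_mem_normalSpace {S : Matrix k k ℝ} (hS : Sᵀ = S) : X * S ∈ normalSpace X Y c :=
  ⟨S, 0, hS, by simp⟩

theorem vecMulVec_mem_normalSpace (u : p → ℝ) : vecMulVec (Y *ᵥ u) c ∈ normalSpace X Y c :=
  ⟨0, u, transpose_zero, by simp⟩

theorem normalSpace_le {N : Submodule ℝ (Matrix m k ℝ)}
    (hX : ∀ S : Matrix k k ℝ, Sᵀ = S → X * S ∈ N) (hY : ∀ u, vecMulVec (Y *ᵥ u) c ∈ N) :
    normalSpace X Y c ≤ N := by
  rintro _ ⟨S, u, hS, rfl⟩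
  exact N.add_mem (hX S hS) (hY u)

end normalSpace

end Matrix

section basisFam

variable {n q : ℕ} {v : Fin n → ℝ} {X : Matrix (Fin n) (Fin q) ℝ}
  {Xp : Matrix (Fin n) (Fin (n - q)) ℝ}

theorem basisFam_inl (i : Fin q) : basisFam n q v X Xp (.inl i) = X * single i i (1 : ℝ) := rfl

theorem basisFam_inr_inl (p : {p : Fin q × Fin q // p.1 < p.2}) :
    basisFam n q v X Xp (.inr (.inl p)) = X * ((√2)⁻¹ • symmSingle p.1.1 p.1.2) :=
  (Matrix.mul_smul _ _ _).symm

theorem basisFam_inr_inr (i : Fin (n - q)) :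
    basisFam n q v X Xp (.inr (.inr i)) =
      vecMulVec (Xp.col i) ((√(∑ k, v k ^ 2))⁻¹ • (v ᵥ* X)) := by
  rw [← smul_vecMul]; rfl

theorem sum_sq_pos_of_pos (hv : ∀ i, 0 < v i) (i : Fin (n - q)) : 0 < ∑ k, v k ^ 2 :=
  haveI : Nonempty (Fin n) := ⟨⟨i, by omega⟩⟩
  Finset.sum_pos (fun k _ => pow_pos (hv k) 2) Finset.univ_nonempty

theorem basisFam_mem_normalSpace (k : BasisIdx n q) :
    basisFam n q v X Xp k ∈ normalSpace X Xp (v ᵥ* X) := by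
  rcases k with i | p | i
  · rw [basisFam_inl]
    exact mul_mem_normalSpace (transpose_single i i 1)
  · rw [basisFam_inr_inl]
    exact mul_mem_normalSpace (by rw [transpose_smul, transpose_symmSingle])
  · rw [basisFam_inr_inr, vecMulVec_smul, ← mulVec_single_one]
    exact Submodule.smul_mem _ _ (vecMulVec_mem_normalSpace _)

theorem trace_basisFam_transpose_mul_basisFam (hXX : Xᵀ * X = 1) (hXXp : Xᵀ * Xp = 0)
    (hXpXp : Xpᵀ * Xp = 1) (hv : ∀ i, 0 < v i) (hvX : ∃ c, X *ᵥ c = v) (k l : BasisIdx n q) :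
    trace ((basisFam n q v X Xp k)ᵀ * basisFam n q v X Xp l) = if k = l then 1 else 0 := by
  have perp (M : Matrix (Fin q) (Fin q) ℝ) (j : Fin (n - q)) :
      trace ((X * M)ᵀ * basisFam n q v X Xp (.inr (.inr j))) = 0 := by
    rw [basisFam_inr_inr, ← mulVec_single_one]
    exact trace_mul_transpose_mul_vecMulVec_of_mulVec_eq_zero
      (by rw [mulVec_mulVec, hXXp, zero_mulVec]) M _
  have diag_offDiag (i : Fin q) (p : {p : Fin q × Fin q // p.1 < p.2}) :
      trace ((basisFam n q v X Xp (.inl i))ᵀ * basisFam n q v X Xp (.inr (.inl p))) = 0 := by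
    rw [basisFam_inl, basisFam_inr_inl, trace_mul_transpose_mul_mul_of_transpose_mul_self hXX,
      Matrix.mul_smul, trace_smul, trace_single_transpose_mul_symmSingle _ p.2.ne, smul_zero]
  rcases k with i | p | i <;> rcases l with j | p' | j
  · rw [basisFam_inl, basisFam_inl, trace_mul_transpose_mul_mul_of_transpose_mul_self hXX,
      trace_single_transpose_mul_single]
    simp
  · rw [diag_offDiag]; simp
  · rw [basisFam_inl, perp]; simp
  · rw [trace_transpose_mul_comm, diag_offDiag]; simp
  · rw [basisFam_inr_inl, basisFam_inr_inl, trace_mul_transpose_mul_mul_of_transpose_mul_self hXX,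
      trace_smul_transpose_mul_smul, trace_symmSingle_transpose_mul_symmSingle p.2 p'.2]
    simp only [Prod.mk.eta, Sum.inr.injEq, Sum.inl.injEq, ← Subtype.ext_iff]
    split_ifs
    · rw [← mul_inv, Real.mul_self_sqrt zero_le_two, inv_mul_cancel₀ two_ne_zero]
    · rw [mul_zero]
  · rw [basisFam_inr_inl, perp]; simp
  · rw [trace_transpose_mul_comm, basisFam_inl, perp]; simp
  · rw [trace_transpose_mul_comm, basisFam_inr_inl, perp]; simp
  · rw [basisFam_inr_inr, basisFam_inr_inr, trace_vecMulVec_transpose_mul_vecMulVec,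
      inv_sqrt_smul_dotProduct_self (sum_sq_pos_of_pos hv i), mul_one, ← mulVec_single_one,
      ← mulVec_single_one, mulVec_dotProduct_mulVec_of_transpose_mul_self hXpXp]
    · simp [Pi.single_apply, eq_comm]
    · rw [vecMul_dotProduct_vecMul_of_transpose_mul_self hXX hvX]
      simp [dotProduct, sq]

theorem span_range_basisFam (hv : ∀ i, 0 < v i) :
    Submodule.span ℝ (Set.range (basisFam n q v X Xp)) = normalSpace X Xp (v ᵥ* X) := by
  set N := Submodule.span ℝ (Set.range (basisFam n q v X Xp))
  have mem (k : BasisIdx n q) : basisFam n q v X Xp k ∈ N := Submodule.subset_span ⟨k, rfl⟩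
  have offDiag_mem (i j : Fin q) (h : i < j) : X * symmSingle i j ∈ N := by
    have := N.smul_mem (√2) (mem (.inr (.inl ⟨(i, j), h⟩)))
    rwa [basisFam_inr_inl, Matrix.mul_smul, smul_inv_smul₀ (by positivity)] at this
  have symmSingle_mem (i j : Fin q) : X * symmSingle i j ∈ N := by
    rcases lt_trichotomy i j with h | rfl | h
    · exact offDiag_mem i j h
    · rw [symmSingle_self, Matrix.mul_smul]
      exact N.smul_mem _ (mem (.inl i))
    · rw [symmSingle_comm]
      exact offDiag_mem j i h
  have col_mem (i : Fin (n - q)) : vecMulVec (Xp.col i) (v ᵥ* X) ∈ N := by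
    have := N.smul_mem (√(∑ k, v k ^ 2)) (mem (.inr (.inr i)))
    rwa [basisFam_inr_inr, vecMulVec_smul,
      smul_inv_smul₀ (Real.sqrt_pos.2 (sum_sq_pos_of_pos hv i)).ne'] at this
  refine le_antisymm (Submodule.span_le.2 (Set.range_subset_iff.2 basisFam_mem_normalSpace))
    (normalSpace_le (fun S hS => ?_) (fun u => ?_))
  · rw [eq_inv_two_smul_sum_sum_smul_symmSingle hS]
    simp only [Matrix.mul_smul, Matrix.mul_sum]
    exact N.smul_mem _ <| N.sum_mem fun i _ => N.sum_mem fun j _ =>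
      N.smul_mem _ (symmSingle_mem i j)
  · rw [vecMulVec_mulVec_eq_sum]
    exact N.sum_mem fun i _ => N.smul_mem _ (col_mem i)

end basisFam

theorem stmt_11_general (n q : ℕ)
    (v : Fin n → ℝ) (hv : ∀ i, 0 < v i)
    (X : Matrix (Fin n) (Fin q) ℝ)
    (hX : Xᵀ * X = 1 ∧ ∃ c : Fin q → ℝ, X *ᵥ c = v)
    (Xp : Matrix (Fin n) (Fin (n - q)) ℝ)
    (hO : (fromCols X Xp)ᵀ * fromCols X Xp = 1)
    (Nset : Set (Matrix (Fin n) (Fin q) ℝ))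
    (hN : Nset = {U | ∃ (S : Matrix (Fin q) (Fin q) ℝ) (u : Fin (n - q) → ℝ),
      Sᵀ = S ∧ U = X * S + vecMulVec (Xp *ᵥ u) (v ᵥ* X)}) :
    (∀ k l : BasisIdx n q,
      Matrix.trace ((basisFam n q v X Xp k)ᵀ * basisFam n q v X Xp l) =
        if k = l then 1 else 0) ∧
    (∀ k : BasisIdx n q, basisFam n q v X Xp k ∈ Nset) ∧
    (Submodule.span ℝ (Set.range (basisFam n q v X Xp)) :
      Set (Matrix (Fin n) (Fin q) ℝ)) = Nset := by
  obtain ⟨hXX, hvX⟩ := hX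
  obtain ⟨-, hXXp, -, hXpXp⟩ := (fromCols_transpose_mul_fromCols_eq_one_iff X Xp).1 hO
  subst hN
  exact ⟨trace_basisFam_transpose_mul_basisFam hXX hXXp hXpXp hv hvX, basisFam_mem_normalSpace,
    congrArg SetLike.coe (span_range_basisFam hv)⟩

/-- The above family is an orthonormal family with respect to the Frobenius
inner product, is contained in `N_X = {XS + X⊥ u vᵀ X : Sᵀ = S, u ∈ ℝ^{n−q}}`, and its linear
span equals `N_X`; i.e., it is an orthonormal basis of `N_X`. -/
theorem stmt_11 (n q : ℕ) (hq : 1 ≤ q) (hnq : q ≤ n)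
    (v : Fin n → ℝ) (hv : ∀ i, 0 < v i)
    (X : Matrix (Fin n) (Fin q) ℝ)
    (hX : Xᵀ * X = 1 ∧ ∃ c : Fin q → ℝ, X *ᵥ c = v)
    (Xp : Matrix (Fin n) (Fin (n - q)) ℝ)
    (hO : (fromCols X Xp)ᵀ * fromCols X Xp = 1)
    (Nset : Set (Matrix (Fin n) (Fin q) ℝ))
    (hN : Nset = {U | ∃ (S : Matrix (Fin q) (Fin q) ℝ) (u : Fin (n - q) → ℝ),
      Sᵀ = S ∧ U = X * S + vecMulVec (Xp *ᵥ u) (v ᵥ* X)}) :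
    (∀ k l : BasisIdx n q,
      Matrix.trace ((basisFam n q v X Xp k)ᵀ * basisFam n q v X Xp l) =
        if k = l then 1 else 0) ∧
    (∀ k : BasisIdx n q, basisFam n q v X Xp k ∈ Nset) ∧
    (Submodule.span ℝ (Set.range (basisFam n q v X Xp)) :
      Set (Matrix (Fin n) (Fin q) ℝ)) = Nset :=
  stmt_11_general n q v hv X hX Xp hO Nset hN
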